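/- arXiv:gr-qc/0510118 — 7 statements merged into one kernel-verified Lean document; each statement's English description precedes it below -/
import Mathlib

section
/- The class of finite posets with stem-embeddings has the amalgamation property: if (A₀,≤₀), (A₁,≤₁), (A₂,≤₂) are finite posets with A₀ = A₁ ∩ A₂ and A₀ a stem of both A₁ and A₂ (induced orders agreeing), then A = A₁ ∪ A₂ with the relation ≤ = ≤₁ ∪ ≤₂ is a partial order, and both A₁ and A₂ are stems of (A,≤). -/
/-- Amalgamation property of finite posets with stem-embeddings:
the union of two finite posets intersecting in a common stem A₀ = A₁ ∩ A₂, with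
the union relation ≤ = ≤₁ ∪ ≤₂, is a partial order in which both A₁ and A₂ are stems. -/
theorem stmt_8 {X : Type*} (A₁ A₂ : Set X) (le1 le2 : X → X → Prop)
    (hfin1 : A₁.Finite) (hfin2 : A₂.Finite)
    (hcover : A₁ ∪ A₂ = Set.univ)
    (hdom1 : ∀ x y, le1 x y → x ∈ A₁ ∧ y ∈ A₁)
    (hdom2 : ∀ x y, le2 x y → x ∈ A₂ ∧ y ∈ A₂)
    (hrefl1 : ∀ x ∈ A₁, le1 x x) (hrefl2 : ∀ x ∈ A₂, le2 x x)
    (hanti1 : ∀ x y, le1 x y → le1 y x → x = y)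
    (hanti2 : ∀ x y, le2 x y → le2 y x → x = y)
    (htrans1 : ∀ x y z, le1 x y → le1 y z → le1 x z)
    (htrans2 : ∀ x y z, le2 x y → le2 y z → le2 x z)
    (hagree : ∀ x y, x ∈ A₁ ∩ A₂ → y ∈ A₁ ∩ A₂ → (le1 x y ↔ le2 x y))
    (hstem1 : ∀ y x, le1 y x → x ∈ A₁ ∩ A₂ → y ∈ A₁ ∩ A₂)
    (hstem2 : ∀ y x, le2 y x → x ∈ A₁ ∩ A₂ → y ∈ A₁ ∩ A₂) :
    (∀ x, le1 x x ∨ le2 x x) ∧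
    (∀ x y, (le1 x y ∨ le2 x y) → (le1 y x ∨ le2 y x) → x = y) ∧
    (∀ x y z, (le1 x y ∨ le2 x y) → (le1 y z ∨ le2 y z) → (le1 x z ∨ le2 x z)) ∧
    (∀ y x, (le1 y x ∨ le2 y x) → x ∈ A₁ → y ∈ A₁) ∧
    (∀ y x, (le1 y x ∨ le2 y x) → x ∈ A₂ → y ∈ A₂) := by

  refine ⟨?_, ?_, ?_, ?_, ?_⟩
  · intro x
    have hx : x ∈ A₁ ∪ A₂ := by rw [hcover]; trivial
    rcases hx with hx | hx
    · exact Or.inl (hrefl1 x hx)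
    · exact Or.inr (hrefl2 x hx)
  · rintro x y (h | h) (h' | h')
    · exact hanti1 x y h h'
    · -- le1 x y, le2 y x : x ∈ A₀
      have hx0 : x ∈ A₁ ∩ A₂ := ⟨(hdom1 x y h).1, (hdom2 y x h').2⟩
      have hy0 : y ∈ A₁ ∩ A₂ := hstem2 y x h' hx0
      exact hanti1 x y h ((hagree y x hy0 hx0).mpr h')
    · have hy0 : y ∈ A₁ ∩ A₂ := ⟨(hdom1 y x h').1, (hdom2 x y h).2⟩
      have hx0 : x ∈ A₁ ∩ A₂ := hstem2 x y h hy0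
      exact hanti2 x y h ((hagree y x hy0 hx0).mp h')
    · exact hanti2 x y h h'
  · rintro x y z (h | h) (h' | h')
    · exact Or.inl (htrans1 x y z h h')
    · have hy0 : y ∈ A₁ ∩ A₂ := ⟨(hdom1 x y h).2, (hdom2 y z h').1⟩
      have hx0 : x ∈ A₁ ∩ A₂ := hstem1 x y h hy0
      exact Or.inr (htrans2 x y z ((hagree x y hx0 hy0).mp h) h')
    · have hy0 : y ∈ A₁ ∩ A₂ := ⟨(hdom1 y z h').1, (hdom2 x y h).2⟩
      have hx0 : x ∈ A₁ ∩ A₂ := hstem2 x y h hy0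
      exact Or.inl (htrans1 x y z ((hagree x y hx0 hy0).mpr h) h')
    · exact Or.inr (htrans2 x y z h h')
  · rintro y x (h | h) hx
    · exact (hdom1 y x h).1
    · exact (hstem2 y x h ⟨hx, (hdom2 y x h).2⟩).1
  · rintro y x (h | h) hx
    · exact (hstem1 y x h ⟨(hdom1 y x h).2, hx⟩).2
    · exact (hdom2 y x h).1
end

section
/- Let (U,≤) be a past-finite causal set realizing all one-point stem-extensions of finite stems. Then (U,≤) is directed: for any a, b ∈ U there exists c ∈ U with a ≤ c and b ≤ c. -/
/-- A stem (downward closed subset) of a poset. -/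
def IsStemIn {U : Type*} [PartialOrder U] (A : Set U) : Prop :=
  ∀ ⦃y x : U⦄, x ∈ A → y ≤ x → y ∈ A

/-- `U` realizes all one-point stem-extensions of finite stems of `U`:
whenever `A` is a finite stem of `U` and `B` is a finite poset containing (an
isomorphic copy of) `A` as a stem with `|B| = |A| + 1`, there is a
stem-embedding `g : B → U` fixing `A` pointwise. -/
def RealizesOnePointExt (U : Type*) [PartialOrder U] : Prop :=
  ∀ (A : Set U), A.Finite → IsStemIn A →
    ∀ (B : Type) (_ : PartialOrder B) (f : A ↪o B),
      (∀ (b : B) (a : A), b ≤ f a → ∃ a' : A, f a' = b) →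
      Nat.card B = A.ncard + 1 →
      ∃ g : B ↪o U, (∀ a : A, g (f a) = (a : U)) ∧
        ∀ (u : U) (b : B), u ≤ g b → ∃ b' : B, g b' = u

theorem isStemIn_Iic {U : Type*} [PartialOrder U] (x : U) : IsStemIn (Set.Iic x) :=
  fun _ _ hz hyz => hyz.trans hz

theorem IsStemIn.union {U : Type*} [PartialOrder U] {A B : Set U} (hA : IsStemIn A)
    (hB : IsStemIn B) : IsStemIn (A ∪ B) := by
  rintro y x (hx | hx) hyx
  · exact .inl (hA hx hyx)
  · exact .inr (hB hx hyx)

/-- Realize the extension of `A` by a new top element: its image bounds `A`.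
The copy of `A` is taken in `Shrink.{0}` since the extensions range over `Type`. -/
theorem RealizesOnePointExt.bddAbove {U : Type*} [PartialOrder U]
    (hreal : RealizesOnePointExt U) {A : Set U} (hfin : A.Finite) (hstem : IsStemIn A) :
    BddAbove A := by
  have : Finite A := hfin
  let f : A ↪o WithTop (Shrink.{0} A) :=
    (orderIsoShrink.{0} A).toOrderEmbedding.trans WithTop.coeOrderHom
  have hf_stem : ∀ (b : WithTop (Shrink.{0} A)) (a : A), b ≤ f a → ∃ a' : A, f a' = b := by
    intro b a hb
    induction b using WithTop.recTopCoe with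
    | top => exact absurd hb (by simp [f])
    | coe i => exact ⟨(orderIsoShrink.{0} A).symm i, by simp [f]⟩
  have hcard : Nat.card (WithTop (Shrink.{0} A)) = A.ncard + 1 := by
    rw [WithTop, Finite.card_option, Nat.card_congr (equivShrink.{0} A).symm,
      Nat.card_coe_set_eq]
  obtain ⟨g, hgf, -⟩ := hreal A hfin hstem _ inferInstance f hf_stem hcard
  refine ⟨g ⊤, fun a ha => ?_⟩
  calc a = g (f ⟨a, ha⟩) := (hgf ⟨a, ha⟩).symm
    _ ≤ g ⊤ := g.monotone le_top

/-- A past-finite causal set realizing all one-point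
stem-extensions of finite stems is directed. -/
theorem stmt_10 {U : Type*} [PartialOrder U]
    (hpf : ∀ x : U, {s : U | s ≤ x}.Finite)
    (hreal : RealizesOnePointExt U) :
    ∀ a b : U, ∃ c : U, a ≤ c ∧ b ≤ c := by
  intro a b
  obtain ⟨c, hc⟩ :=
    hreal.bddAbove ((hpf a).union (hpf b)) ((isStemIn_Iic a).union (isStemIn_Iic b))
  exact ⟨c, hc (.inl le_rfl), hc (.inr le_rfl)⟩
end

section
/- Let (U,≤) be a past-finite causal set realizing all one-point stem-extensions of finite stems. Then for any finite antichain A ⊆ U (possibly empty) and any y ∈ U \ A with A ⊆ past(y), there exists x ∈ U \ A with x incomparable to y and past(x) = past(A) ∪ {x}. -/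
/-- `α` together with one new point, placed above exactly the elements of
`lowerClosure D`. -/
def WithPointAbove {α : Type*} (_D : Set α) : Type _ := Option α

namespace WithPointAbove

variable {α : Type*} {D : Set α}

def of (s : α) : WithPointAbove D := Option.some s

def new : WithPointAbove D := Option.none

instance [Finite α] : Finite (WithPointAbove D) :=
  inferInstanceAs (Finite (Option α))

theorem natCard [Finite α] : Nat.card (WithPointAbove D) = Nat.card α + 1 :=
  Finite.card_option

variable [PartialOrder α]

instance : PartialOrder (WithPointAbove D) where
  le
    | some s, some t => s ≤ t
    | some s, none => s ∈ lowerClosure D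
    | none, none => True
    | none, some _ => False
  le_refl
    | some s => le_refl s
    | none => trivial
  le_trans
    | some _, some _, some _, hst, htu => hst.trans htu
    | some _, some _, none, hst, ht => (lowerClosure D).lower hst ht
    | some _, none, none, hs, _ => hs
    | none, none, none, _, _ => trivial
    | none, some _, _, h, _ => h.elim
    | _, none, some _, _, h => h.elim
  le_antisymm
    | some _, some _, hst, hts => congrArg _ (le_antisymm hst hts)
    | none, none, _, _ => rfl
    | none, some _, h, _ => h.elim
    | some _, none, _, h => h.elim

theorem of_le_of {s t : α} : (of s : WithPointAbove D) ≤ of t ↔ s ≤ t := Iff.rfl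

theorem of_le_new {s : α} : (of s : WithPointAbove D) ≤ new ↔ s ∈ lowerClosure D :=
  Iff.rfl

theorem not_new_le_of (s : α) : ¬ (new : WithPointAbove D) ≤ of s := id

def embedding : α ↪o WithPointAbove D :=
  OrderEmbedding.ofMapLEIff of fun _ _ ↦ of_le_of

theorem mem_range_embedding_of_le {b : WithPointAbove D} {s : α} (h : b ≤ embedding s) :
    b ∈ Set.range embedding := by
  cases b with
  | none => exact absurd h (not_new_le_of s)
  | some t => exact ⟨t, rfl⟩

end WithPointAbove

/-- `RealizesOnePointExt` only speaks of extensions `B : Type`; any finite `B` can be moved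
there through `Shrink`. -/
theorem RealizesOnePointExt.exists_stemEmbedding {U : Type*} [PartialOrder U]
    (hU : RealizesOnePointExt U) {A : Set U} (hA : A.Finite) (hstem : IsStemIn A)
    {B : Type*} [PartialOrder B] [Finite B] (f : A ↪o B)
    (hf : ∀ (b : B) (a : A), b ≤ f a → b ∈ Set.range f) (hcard : Nat.card B = A.ncard + 1) :
    ∃ g : B ↪o U, (∀ a : A, g (f a) = a) ∧ ∀ (u : U) (b : B), u ≤ g b → u ∈ Set.range g := by
  set e := orderIsoShrink.{0} B
  obtain ⟨g, hgf, hgstem⟩ := hU A hA hstem (Shrink B) inferInstance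
    (f.trans e.toOrderEmbedding)
    (fun b a hb ↦ by
      obtain ⟨a', ha'⟩ := hf (e.symm b) a (e.symm_apply_le.mpr hb)
      exact ⟨a', by simp [ha']⟩)
    (by rw [Nat.card_congr e.symm.toEquiv, hcard])
  refine ⟨e.toOrderEmbedding.trans g, hgf, fun u b hu ↦ ?_⟩
  obtain ⟨b', rfl⟩ := hgstem u (e b) hu
  exact ⟨e.symm b', by simp⟩

theorem RealizesOnePointExt.exists_Iic_eq_insert {U : Type*} [PartialOrder U]
    (hU : RealizesOnePointExt U) {S : Set U} (hS : S.Finite) (hstem : IsStemIn S)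
    {D : Set U} (hDS : D ⊆ S) :
    ∃ x : U, (∀ s ∈ S, ¬ x ≤ s) ∧ Set.Iic x = insert x (lowerClosure D : Set U) := by
  have : Finite S := hS
  let D' : Set S := Subtype.val ⁻¹' D
  obtain ⟨g, hgf, hgstem⟩ := hU.exists_stemEmbedding hS hstem
    (WithPointAbove.embedding (D := D')) (fun _ _ ↦ WithPointAbove.mem_range_embedding_of_le)
    (by rw [WithPointAbove.natCard, Nat.card_coe_set_eq])
  have hg (s : U) (hs : s ∈ S) : g (.of ⟨s, hs⟩) = s := hgf ⟨s, hs⟩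
  refine ⟨g .new, fun s hs hle ↦ ?_, ?_⟩
  · exact WithPointAbove.not_new_le_of _ (g.le_iff_le.mp (hle.trans_eq (hg s hs).symm))
  ext u
  constructor
  · intro hu
    obtain ⟨b, rfl⟩ := hgstem u .new hu
    cases b with
    | none => exact Or.inl rfl
    | some s =>
      obtain ⟨d, hd, hsd⟩ := WithPointAbove.of_le_new.mp (g.le_iff_le.mp hu)
      exact Or.inr ⟨d, hd, (hg s s.2).trans_le hsd⟩
  · rintro (rfl | ⟨d, hd, hud⟩)
    · exact le_rfl
    · have hu : u ∈ S := hstem (hDS hd) hud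
      refine (hg u hu).symm.trans_le (g.le_iff_le.mpr ?_)
      exact ⟨⟨d, hDS hd⟩, hd, hud⟩

theorem stmt_11_general {U : Type*} [PartialOrder U]
    (hpf : ∀ x : U, {s : U | s ≤ x}.Finite)
    (hreal : RealizesOnePointExt U)
    (A : Set U)
    (y : U) (hy : y ∉ A) (hAy : ∀ a ∈ A, a ≤ y) :
    ∃ x : U, x ∉ A ∧ ¬ x ≤ y ∧ ¬ y ≤ x ∧
      {s : U | s ≤ x} = (⋃ a ∈ A, {s : U | s ≤ a}) ∪ {x} := by
  obtain ⟨x, hx_not_le, hIic⟩ :=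
    hreal.exists_Iic_eq_insert (hpf y) (fun _ _ hs hts ↦ hts.trans hs) hAy
  have hxy : ¬ x ≤ y := hx_not_le y le_rfl
  refine ⟨x, fun hxA ↦ hxy (hAy x hxA), hxy, fun hyx ↦ ?_, ?_⟩
  · obtain rfl | ⟨a, ha, hya⟩ := hIic ▸ Set.mem_Iic.mpr hyx
    · exact hxy le_rfl
    · exact hy (le_antisymm hya (hAy a ha) ▸ ha)
  · rw [Set.union_singleton]
    exact hIic.trans (congrArg _ (coe_lowerClosure A))

/-- If a past-finite causal set realizes all one-point
stem-extensions of finite stems, then for any finite antichain A and any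
y ∉ A with A ⊆ past(y) there is x ∉ A incomparable to y with
past(x) = past(A) ∪ {x}. -/
theorem stmt_11 {U : Type*} [PartialOrder U]
    (hpf : ∀ x : U, {s : U | s ≤ x}.Finite)
    (hreal : RealizesOnePointExt U)
    (A : Set U) (hA : A.Finite)
    (hanti : ∀ a ∈ A, ∀ b ∈ A, a ≠ b → ¬ a ≤ b)
    (y : U) (hy : y ∉ A) (hAy : ∀ a ∈ A, a ≤ y) :
    ∃ x : U, x ∉ A ∧ ¬ x ≤ y ∧ ¬ y ≤ x ∧
      {s : U | s ≤ x} = (⋃ a ∈ A, {s : U | s ≤ a}) ∪ {x} :=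
  stmt_11_general hpf hreal A y hy hAy
end

section
/- There exists a countable past-finite causal set (U,≤) that is stem-universal (every countable past-finite causal set embeds onto a stem of U) and homogeneous (every isomorphism between two finite stems of U extends to an automorphism of U). -/
open Set

section Stems

variable {α β : Type*} [PartialOrder α] [PartialOrder β]

lemma IsStemIn.insert {A : Set α} {z : α} (hA : IsStemIn A) (hz : Iio z ⊆ A) :
    IsStemIn (insert z A) := by
  rintro y x (rfl | hx) hyx
  · exact (eq_or_lt_of_le hyx).imp id fun h => hz h
  · exact mem_insert_of_mem _ (hA hx hyx)

lemma isStemIn_biUnion {ι : Type*} {s : Set ι} {A : ι → Set α} (hA : ∀ i ∈ s, IsStemIn (A i)) :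
    IsStemIn (⋃ i ∈ s, A i) := by
  simp only [IsStemIn, mem_iUnion₂]
  exact fun y x ⟨i, hi, hx⟩ hyx => ⟨i, hi, hA i hi hx hyx⟩

lemma wellFoundedLT_of_finite_Iic (h : ∀ x : α, (Iic x).Finite) : WellFoundedLT α :=
  ⟨(InvImage.wf (fun x => (Iic x).ncard) wellFounded_lt).mono fun _ y hxy =>
    ncard_lt_ncard (Iic_ssubset_Iic.2 hxy) (h y)⟩

def IsStemRich (α : Type*) [PartialOrder α] : Prop :=
  ∀ D : Set α, D.Finite → IsStemIn D → {u : α | Iio u = D}.Infinite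

end Stems

structure FinStemIso (α β : Type*) [PartialOrder α] [PartialOrder β] where
  graph : Set (α × β)
  finite : graph.Finite
  le_iff_le : ∀ p ∈ graph, ∀ q ∈ graph, p.1 ≤ q.1 ↔ p.2 ≤ q.2
  isStemIn_fst : IsStemIn (Prod.fst '' graph)
  isStemIn_snd : IsStemIn (Prod.snd '' graph)

namespace FinStemIso

variable {α β : Type*} [PartialOrder α] [PartialOrder β]

instance : Preorder (FinStemIso α β) := Preorder.lift graph

instance : Inhabited (FinStemIso α β) :=
  ⟨⟨∅, finite_empty, by simp, by simp [IsStemIn], by simp [IsStemIn]⟩⟩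

def dom (P : FinStemIso α β) : Set α := Prod.fst '' P.graph

def ran (P : FinStemIso α β) : Set β := Prod.snd '' P.graph

lemma dom_mono {P Q : FinStemIso α β} (h : P ≤ Q) : P.dom ⊆ Q.dom := image_mono h

lemma eq_iff_eq (P : FinStemIso α β) {p q : α × β} (hp : p ∈ P.graph) (hq : q ∈ P.graph) :
    p.1 = q.1 ↔ p.2 = q.2 := by
  simp only [le_antisymm_iff, P.le_iff_le p hp q hq, P.le_iff_le q hq p hp]

def symm (P : FinStemIso α β) : FinStemIso β α where
  graph := Prod.swap '' P.graph
  finite := P.finite.image _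
  le_iff_le := by
    rintro _ ⟨p, hp, rfl⟩ _ ⟨q, hq, rfl⟩
    exact (P.le_iff_le p hp q hq).symm
  isStemIn_fst := by
    rw [image_image]
    exact P.isStemIn_snd
  isStemIn_snd := by
    rw [image_image]
    exact P.isStemIn_fst

lemma symm_symm (P : FinStemIso α β) : P.symm.symm = P := by
  cases P
  simp [symm, image_image]

lemma symm_le_symm {P Q : FinStemIso α β} (h : P ≤ Q) : P.symm ≤ Q.symm := image_mono h

lemma ran_symm (P : FinStemIso α β) : P.symm.ran = P.dom := image_image _ _ _

lemma exists_le_mem_dom_of_Iio_subset (hβ : IsStemRich β) (P : FinStemIso α β) {z : α}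
    (hz : Iio z ⊆ P.dom) (hzP : z ∉ P.dom) : ∃ Q, P ≤ Q ∧ z ∈ Q.dom := by
  set D := Prod.snd '' {p ∈ P.graph | p.1 < z}
  have mem_D {p : α × β} (hp : p ∈ P.graph) : p.2 ∈ D ↔ p.1 < z := by
    refine ⟨?_, fun h => ⟨p, ⟨hp, h⟩, rfl⟩⟩
    rintro ⟨q, ⟨hq, hqz⟩, hqp⟩
    exact (P.eq_iff_eq hq hp).2 hqp ▸ hqz
  have hD : IsStemIn D := by
    rintro y _ ⟨p, ⟨hp, hpz⟩, rfl⟩ hyp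
    obtain ⟨q, hq, rfl⟩ := P.isStemIn_snd ⟨p, hp, rfl⟩ hyp
    exact (mem_D hq).2 (((P.le_iff_le q hq p hp).2 hyp).trans_lt hpz)
  obtain ⟨u, hu, huP⟩ :=
    ((hβ D ((P.finite.subset (sep_subset _ _)).image _) hD).sdiff
      (P.finite.image Prod.snd)).nonempty
  change Iio u = D at hu
  have le_iff_le_new {p : α × β} (hp : p ∈ P.graph) : p.1 ≤ z ↔ p.2 ≤ u := by
    have hpz : p.1 ≠ z := fun h => hzP ⟨p, hp, h⟩
    have hpu : p.2 ≠ u := fun h => huP ⟨p, hp, h⟩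
    rw [hpz.le_iff_lt, hpu.le_iff_lt, ← mem_D hp, ← hu, mem_Iio]
  refine ⟨⟨insert (z, u) P.graph, P.finite.insert _, ?_, ?_, ?_⟩, subset_insert _ _,
    (z, u), mem_insert _ _, rfl⟩
  · rintro p (rfl | hp) q (rfl | hq)
    · exact iff_of_true le_rfl le_rfl
    · exact iff_of_false (fun h => hzP (P.isStemIn_fst ⟨q, hq, rfl⟩ h))
        (fun h => huP (P.isStemIn_snd ⟨q, hq, rfl⟩ h))
    · exact le_iff_le_new hp
    · exact P.le_iff_le p hp q hq
  · rw [image_insert_eq]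
    exact P.isStemIn_fst.insert hz
  · rw [image_insert_eq]
    refine P.isStemIn_snd.insert ?_
    rw [hu]
    exact image_mono (sep_subset _ _)

lemma isCofinal_setOf_subset_dom {S : Set α} (hS : S.Finite)
    (h : ∀ x ∈ S, IsCofinal {Q : FinStemIso α β | x ∈ Q.dom}) :
    IsCofinal {Q : FinStemIso α β | S ⊆ Q.dom} := by
  induction S, hS using Set.Finite.induction_on with
  | empty => exact fun P => ⟨P, empty_subset _, le_rfl⟩
  | insert _ _ ih =>
    intro P
    obtain ⟨Q, hSQ, hPQ⟩ := ih (fun x hx => h x (mem_insert_of_mem _ hx)) P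
    obtain ⟨R, hxR, hQR⟩ := h _ (mem_insert _ _) Q
    exact ⟨R, insert_subset hxR (hSQ.trans (dom_mono hQR)), hPQ.trans hQR⟩

lemma isCofinal_setOf_mem_dom (hα : ∀ x : α, (Iic x).Finite) (hβ : IsStemRich β) (x : α) :
    IsCofinal {Q : FinStemIso α β | x ∈ Q.dom} := by
  have := wellFoundedLT_of_finite_Iic hα
  induction x using WellFoundedLT.induction with
  | _ x ih =>
  intro P
  obtain ⟨Q, hxQ, hPQ⟩ := isCofinal_setOf_subset_dom ((hα x).subset Iio_subset_Iic_self) ih P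
  by_cases hx : x ∈ Q.dom
  · exact ⟨Q, hx, hPQ⟩
  obtain ⟨R, hQR, hxR⟩ := Q.exists_le_mem_dom_of_Iio_subset hβ hxQ hx
  exact ⟨R, hxR, hPQ.trans hQR⟩

lemma isCofinal_setOf_mem_ran (hα : IsStemRich α) (hβ : ∀ y : β, (Iic y).Finite) (y : β) :
    IsCofinal {Q : FinStemIso α β | y ∈ Q.ran} := by
  intro P
  obtain ⟨Q, hyQ, hPQ⟩ := isCofinal_setOf_mem_dom hβ hα y P.symm
  refine ⟨Q.symm, ?_, ?_⟩
  · show y ∈ Q.symm.ran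
    rwa [ran_symm]
  · simpa only [symm_symm] using symm_le_symm hPQ

lemma exists_orderEmbedding_of_ideal (I : Order.Ideal (FinStemIso α β))
    (hI : ∀ x : α, ∃ P ∈ I, x ∈ P.dom) :
    ∃ f : α ↪o β, (∀ P ∈ I, ∀ p ∈ P.graph, f p.1 = p.2) ∧ range f = ⋃ P ∈ I, P.ran := by
  have le_iff_le {P Q : FinStemIso α β} (hP : P ∈ I) (hQ : Q ∈ I) {p q : α × β}
      (hp : p ∈ P.graph) (hq : q ∈ Q.graph) : p.1 ≤ q.1 ↔ p.2 ≤ q.2 := by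
    obtain ⟨R, -, hPR, hQR⟩ := I.directed P hP Q hQ
    exact R.le_iff_le p (hPR hp) q (hQR hq)
  have eq_iff_eq {P Q : FinStemIso α β} (hP : P ∈ I) (hQ : Q ∈ I) {p q : α × β}
      (hp : p ∈ P.graph) (hq : q ∈ Q.graph) : p.1 = q.1 ↔ p.2 = q.2 := by
    simp only [le_antisymm_iff, le_iff_le hP hQ hp hq, le_iff_le hQ hP hq hp]
  choose P hP hxP using hI
  choose g hg hgx using hxP
  let f : α ↪o β := OrderEmbedding.ofMapLEIff (fun x => (g x).2) fun x y => by
    rw [← le_iff_le (hP x) (hP y) (hg x) (hg y), hgx, hgx]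
  have hf (Q : FinStemIso α β) (hQ : Q ∈ I) (q : α × β) (hq : q ∈ Q.graph) : f q.1 = q.2 :=
    (eq_iff_eq (hP _) hQ (hg _) hq).1 (hgx _)
  refine ⟨f, hf, Subset.antisymm ?_ ?_⟩
  · rintro _ ⟨x, rfl⟩
    exact mem_biUnion (hP x) ⟨g x, hg x, rfl⟩
  · simp only [iUnion_subset_iff]
    rintro Q hQ _ ⟨q, hq, rfl⟩
    exact ⟨q.1, hf Q hQ q hq⟩

theorem exists_orderEmbedding_isStemIn_range [Countable α] (hα : ∀ x : α, (Iic x).Finite)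
    (hβ : IsStemRich β) : ∃ f : α ↪o β, IsStemIn (range f) := by
  have := Encodable.ofCountable α
  let 𝒟 (x : α) : Order.Cofinal (FinStemIso α β) := ⟨_, isCofinal_setOf_mem_dom hα hβ x⟩
  obtain ⟨f, -, hrange⟩ := exists_orderEmbedding_of_ideal (Order.idealOfCofinals default 𝒟)
    fun x => (Order.cofinal_meets_idealOfCofinals default 𝒟 x).imp fun _ => And.symm
  exact ⟨f, hrange ▸ isStemIn_biUnion fun Q _ => Q.isStemIn_snd⟩

theorem exists_orderIso_extending [Countable α] [Countable β] (hα : ∀ x : α, (Iic x).Finite)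
    (hα' : IsStemRich α) (hβ : ∀ y : β, (Iic y).Finite) (hβ' : IsStemRich β)
    (P : FinStemIso α β) : ∃ g : α ≃o β, ∀ p ∈ P.graph, g p.1 = p.2 := by
  have := Encodable.ofCountable α
  have := Encodable.ofCountable β
  let 𝒟 : α ⊕ β → Order.Cofinal (FinStemIso α β) := Sum.elim
    (fun x => ⟨_, isCofinal_setOf_mem_dom hα hβ' x⟩)
    (fun y => ⟨_, isCofinal_setOf_mem_ran hα' hβ y⟩)
  obtain ⟨f, hf, hrange⟩ := exists_orderEmbedding_of_ideal (Order.idealOfCofinals P 𝒟) fun x =>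
    (Order.cofinal_meets_idealOfCofinals P 𝒟 (.inl x)).imp fun _ => And.symm
  have hsurj : Function.Surjective f := by
    rw [← range_eq_univ, hrange, eq_univ_iff_forall]
    intro y
    obtain ⟨Q, hyQ, hQ⟩ := Order.cofinal_meets_idealOfCofinals P 𝒟 (.inr y)
    exact mem_biUnion hQ hyQ
  exact ⟨OrderIso.ofSurjective f hsurj, hf P (Order.mem_idealOfCofinals P 𝒟)⟩

def ofOrderIso {A : Set α} {B : Set β} (hA : A.Finite) (hA' : IsStemIn A) (hB' : IsStemIn B)
    (e : A ≃o B) : FinStemIso α β where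
  graph := range fun a : A => ((a : α), (e a : β))
  finite := @finite_range _ _ _ hA.to_subtype
  le_iff_le := by
    rintro _ ⟨a, rfl⟩ _ ⟨b, rfl⟩
    exact e.le_iff_le.symm
  isStemIn_fst := by
    rw [← range_comp]
    show IsStemIn (range ((↑) : A → α))
    rwa [Subtype.range_coe]
  isStemIn_snd := by
    rw [← range_comp]
    show IsStemIn (range (((↑) : B → β) ∘ e))
    rwa [e.surjective.range_comp, Subtype.range_coe]

end FinStemIso

/-- `mk n f` is a tree labelled `n` whose immediate subtrees are the `f i`; the labels give
infinitely many trees with the same immediate subtrees. -/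
abbrev UniversalCauset : Type := WType fun a : ℕ × ℕ => Fin a.2

namespace UniversalCauset

def mk (n : ℕ) {k : ℕ} (f : Fin k → UniversalCauset) : UniversalCauset :=
  WType.mk (n, k) f

def IsChild (x : UniversalCauset) : UniversalCauset → Prop
  | ⟨_, f⟩ => x ∈ range f

lemma depth_lt_of_isChild {x y : UniversalCauset} (h : IsChild x y) : x.depth < y.depth := by
  obtain ⟨a, f⟩ := y
  obtain ⟨i, rfl⟩ := h
  exact WType.depth_lt_depth_mk (β := fun a : ℕ × ℕ => Fin a.2) a f i

lemma depth_lt_of_transGen {x y : UniversalCauset} (h : Relation.TransGen IsChild x y) :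
    x.depth < y.depth := by
  induction h with
  | single h => exact depth_lt_of_isChild h
  | tail _ h ih => exact ih.trans (depth_lt_of_isChild h)

instance : IsStrictOrder UniversalCauset (Relation.TransGen IsChild) where
  irrefl _ h := (depth_lt_of_transGen h).false

instance : PartialOrder UniversalCauset := partialOrderOfSO (Relation.TransGen IsChild)

lemma le_iff_reflTransGen {x y : UniversalCauset} : x ≤ y ↔ Relation.ReflTransGen IsChild x y := by
  rw [Relation.reflTransGen_iff_eq_or_transGen, eq_comm]
  rfl

lemma lt_mk_iff {x : UniversalCauset} {n k : ℕ} {f : Fin k → UniversalCauset} :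
    x < mk n f ↔ ∃ i, x ≤ f i := by
  change Relation.TransGen IsChild x (mk n f) ↔ _
  simp only [Relation.TransGen.tail'_iff, ← le_iff_reflTransGen]
  exact ⟨fun ⟨_, hx, i, hi⟩ => ⟨i, hi ▸ hx⟩, fun ⟨i, hx⟩ => ⟨f i, hx, i, rfl⟩⟩

lemma Iio_mk (n : ℕ) {k : ℕ} (f : Fin k → UniversalCauset) : Iio (mk n f) = ⋃ i, Iic (f i) := by
  ext x
  simp [lt_mk_iff]

lemma finite_Iic (x : UniversalCauset) : (Iic x).Finite := by
  induction x with
  | mk a f ih =>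
    rw [← Iio_insert]
    exact ((finite_iUnion ih).subset (Iio_mk a.1 f).subset).insert _

lemma isStemRich : IsStemRich UniversalCauset := by
  intro D hD hDs
  have := hD.to_subtype
  let e := (Finite.equivFin D).symm
  refine infinite_of_injective_forall_mem (f := fun n => mk n (Subtype.val ∘ e))
    (fun n m h => (Prod.mk.inj (WType.mk.inj h).1).1) fun n => ?_
  show Iio (mk n _) = D
  rw [Iio_mk]
  refine Subset.antisymm (iUnion_subset fun i _ hy => hDs (e i).2 hy) fun y hy => ?_
  exact mem_iUnion.2 ⟨e.symm ⟨y, hy⟩, by rw [mem_Iic, Function.comp_apply, e.apply_symm_apply]⟩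

end UniversalCauset

/-- There exists a countable past-finite causal set that is
stem-universal and homogeneous. -/
theorem stmt_14 : ∃ (U : Type) (_ : PartialOrder U), Countable U ∧
    (∀ x : U, {s : U | s ≤ x}.Finite) ∧
    (∀ (C : Type) (_ : PartialOrder C), Countable C →
      (∀ x : C, {s : C | s ≤ x}.Finite) →
      ∃ f : C ↪o U, ∀ (u : U) (c : C), u ≤ f c → ∃ c' : C, f c' = u) ∧
    (∀ (A B : Set U), A.Finite → B.Finite → IsStemIn A → IsStemIn B →
      ∀ e : A ≃o B, ∃ g : U ≃o U, ∀ a : A, g a = (e a : U)) := by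
  refine ⟨UniversalCauset, inferInstance, inferInstance, UniversalCauset.finite_Iic, ?_, ?_⟩
  · intro C _ _ hC
    obtain ⟨f, hf⟩ := FinStemIso.exists_orderEmbedding_isStemIn_range hC UniversalCauset.isStemRich
    exact ⟨f, fun u c hu => hf (mem_range_self c) hu⟩
  · intro A B hA _ hA' hB' e
    obtain ⟨g, hg⟩ := (FinStemIso.ofOrderIso hA hA' hB' e).exists_orderIso_extending
      UniversalCauset.finite_Iic UniversalCauset.isStemRich
      UniversalCauset.finite_Iic UniversalCauset.isStemRich
    exact ⟨g, fun a => hg _ ⟨a, rfl⟩⟩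
end

section
/- Any two countable past-finite causal sets that are both stem-universal and homogeneous are order-isomorphic. -/
section Aux

variable {U V : Type} [PartialOrder U] [PartialOrder V]

/-- A partial order-isomorphism with finite stem domain and stem image. -/
structure PIso (U V : Type) [PartialOrder U] [PartialOrder V] where
  A : Set U
  p : U → V
  finA : A.Finite
  stemA : IsStemIn A
  stemB : IsStemIn (p '' A)
  piff : ∀ a ∈ A, ∀ a' ∈ A, (p a ≤ p a' ↔ a ≤ a')

lemma stem_image_orderIso (g : V ≃o V) {S : Set V} (hS : IsStemIn S) :
    IsStemIn (g '' S) := by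
  rintro y x ⟨a, ha, rfl⟩ hyx
  refine ⟨g.symm y, hS ha ?_, g.apply_symm_apply y⟩
  rw [← g.le_iff_le, g.apply_symm_apply]
  exact hyx

/-- From stem-universality: any finite set sits inside a "stem embedding" function. -/
lemma univ_fun [Nonempty V]
    (huniv : ∀ (C : Type) (_ : PartialOrder C), Countable C →
      (∀ x : C, {s : C | s ≤ x}.Finite) →
      ∃ f : C ↪o V, ∀ (v : V) (c : C), v ≤ f c → ∃ c' : C, f c' = v)
    {W : Set U} (hWf : W.Finite) :
    ∃ q : U → V, (∀ a ∈ W, ∀ a' ∈ W, (q a ≤ q a' ↔ a ≤ a')) ∧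
      (∀ (y : V) (a : U), a ∈ W → y ≤ q a → ∃ w ∈ W, q w = y) := by
  haveI := hWf.to_subtype
  haveI : DecidablePred (· ∈ W) := fun _ => Classical.propDecidable _
  obtain ⟨j, hj⟩ := huniv (↥W) inferInstance inferInstance (fun x => Set.toFinite _)
  refine ⟨fun x => if h : x ∈ W then j ⟨x, h⟩ else Classical.arbitrary V, ?_, ?_⟩
  · intro a ha a' ha'
    simp only [dif_pos ha, dif_pos ha', j.le_iff_le, Subtype.mk_le_mk]
  · intro y a ha hy
    simp only [dif_pos ha] at hy
    obtain ⟨c', hc'⟩ := hj y ⟨a, ha⟩ hy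
    exact ⟨c'.1, c'.2, by simp only [dif_pos c'.2, Subtype.coe_eta, hc']⟩

/-- From homogeneity: a function giving an iso between two finite stems extends
to an automorphism. -/
lemma hom_fun
    (hhom : ∀ (A B : Set U), A.Finite → B.Finite → IsStemIn A → IsStemIn B →
      ∀ e : A ≃o B, ∃ g : U ≃o U, ∀ a : A, g a = (e a : U))
    {A B : Set U} (hAf : A.Finite) (hBf : B.Finite) (hAs : IsStemIn A) (hBs : IsStemIn B)
    (p : U → U) (hmap : ∀ a ∈ A, p a ∈ B) (hsurj : ∀ b ∈ B, ∃ a ∈ A, p a = b)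
    (hiff : ∀ a ∈ A, ∀ a' ∈ A, (p a ≤ p a' ↔ a ≤ a')) :
    ∃ g : U ≃o U, ∀ a ∈ A, g a = p a := by
  have hbij : Function.Bijective (fun a : A => (⟨p a, hmap a a.2⟩ : B)) := by
    constructor
    · intro a a' h
      have h1 : p (a : U) = p (a' : U) := congrArg Subtype.val h
      exact Subtype.ext (le_antisymm ((hiff a a.2 a' a'.2).1 h1.le)
        ((hiff a' a'.2 a a.2).1 h1.ge))
    · rintro ⟨b, hb⟩
      obtain ⟨a, ha, hpa⟩ := hsurj b hb
      exact ⟨⟨a, ha⟩, Subtype.ext hpa⟩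
  let e : A ≃o B := ⟨Equiv.ofBijective _ hbij, by
    intro a a'
    show (⟨p a, _⟩ : B) ≤ ⟨p a', _⟩ ↔ _
    rw [Subtype.mk_le_mk]
    exact (hiff a a.2 a' a'.2).trans Subtype.coe_le_coe⟩
  obtain ⟨g, hg⟩ := hhom A B hAf hBf hAs hBs e
  exact ⟨g, fun a ha => hg ⟨a, ha⟩⟩


/-- Forward extension: enlarge the domain of a partial iso to contain `u`. -/
lemma ext_fwd [Nonempty U] [Nonempty V]
    (hVuniv : ∀ (C : Type) (_ : PartialOrder C), Countable C →
      (∀ x : C, {s : C | s ≤ x}.Finite) →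
      ∃ f : C ↪o V, ∀ (v : V) (c : C), v ≤ f c → ∃ c' : C, f c' = v)
    (hVhom : ∀ (A B : Set V), A.Finite → B.Finite → IsStemIn A → IsStemIn B →
      ∀ e : A ≃o B, ∃ g : V ≃o V, ∀ a : A, g a = (e a : V))
    (hUpf : ∀ x : U, {s : U | s ≤ x}.Finite)
    (P : PIso U V) (u : U) :
    ∃ P' : PIso U V, P.A ⊆ P'.A ∧ (∀ a ∈ P.A, P'.p a = P.p a) ∧ u ∈ P'.A := by
  classical
  set W : Set U := P.A ∪ {s | s ≤ u} with hW
  have hAW : P.A ⊆ W := Set.subset_union_left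
  have hWf : W.Finite := P.finA.union (hUpf u)
  have hWs : IsStemIn W := by
    rintro y x (hx | hx) hyx
    · exact Or.inl (P.stemA hx hyx)
    · exact Or.inr (le_trans hyx hx)
  obtain ⟨r, hriff, hrdc⟩ := univ_fun hVuniv hWf
  have hinj : Set.InjOn r W := fun a ha a' ha' h =>
    le_antisymm ((hriff a ha a' ha').1 h.le) ((hriff a' ha' a ha).1 h.ge)
  have hsub : ∀ S ⊆ W, IsStemIn S → IsStemIn (r '' S) := by
    rintro S hSW hS y x ⟨a, ha, rfl⟩ hyx
    obtain ⟨w, hw, rfl⟩ := hrdc y a (hSW ha) hyx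
    exact ⟨w, hS ha ((hriff w hw a (hSW ha)).1 hyx), rfl⟩
  -- the intermediate map on V : from r '' P.A to P.p '' P.A
  have hBs : IsStemIn (P.p '' P.A) := P.stemB
  have hBf : (P.p '' P.A).Finite := P.finA.image _
  have hrAs : IsStemIn (r '' P.A) := hsub _ hAW P.stemA
  have hrAf : (r '' P.A).Finite := P.finA.image _
  have hinv : ∀ a ∈ W, Function.invFunOn r W (r a) = a :=
    fun a ha => hinj.leftInvOn_invFunOn ha
  obtain ⟨h, hh⟩ := hom_fun hVhom hrAf hBf hrAs hBs
      (fun x => P.p (Function.invFunOn r W x))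
      (by rintro x ⟨a, ha, rfl⟩; simp only [hinv a (hAW ha)]; exact ⟨a, ha, rfl⟩)
      (by rintro b ⟨a, ha, rfl⟩; exact ⟨r a, ⟨a, ha, rfl⟩, by simp only [hinv a (hAW ha)]⟩)
      (by rintro x ⟨a, ha, rfl⟩ x' ⟨a', ha', rfl⟩
          simp only [hinv a (hAW ha), hinv a' (hAW ha')]
          exact (P.piff a ha a' ha').trans (hriff a (hAW ha) a' (hAW ha')).symm)
  have hha : ∀ a ∈ P.A, h (r a) = P.p a := by
    intro a ha
    rw [hh (r a) ⟨a, ha, rfl⟩, hinv a (hAW ha)]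
  refine ⟨⟨W, fun x => h (r x), hWf, hWs, ?_, ?_⟩, hAW, fun a ha => hha a ha,
    Or.inr le_rfl⟩
  · have : (fun x => h (r x)) '' W = h '' (r '' W) := by
      rw [← Set.image_comp]; rfl
    rw [this]
    exact stem_image_orderIso h (hsub W Set.Subset.rfl hWs)
  · intro a ha a' ha'
    rw [h.le_iff_le]
    exact hriff a ha a' ha'


/-- Backward extension: enlarge the image of a partial iso to contain `v`. -/
lemma ext_bwd [Nonempty U] [Nonempty V]
    (hUuniv : ∀ (C : Type) (_ : PartialOrder C), Countable C →
      (∀ x : C, {s : C | s ≤ x}.Finite) →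
      ∃ f : C ↪o U, ∀ (u : U) (c : C), u ≤ f c → ∃ c' : C, f c' = u)
    (hUhom : ∀ (A B : Set U), A.Finite → B.Finite → IsStemIn A → IsStemIn B →
      ∀ e : A ≃o B, ∃ g : U ≃o U, ∀ a : A, g a = (e a : U))
    (hVpf : ∀ x : V, {s : V | s ≤ x}.Finite)
    (P : PIso U V) (v : V) :
    ∃ P' : PIso U V, P.A ⊆ P'.A ∧ (∀ a ∈ P.A, P'.p a = P.p a) ∧
      ∃ a ∈ P'.A, P'.p a = v := by
  classical
  set B : Set V := P.p '' P.A with hB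
  set W : Set V := B ∪ {s | s ≤ v} with hWdef
  have hBW : B ⊆ W := Set.subset_union_left
  have hWf : W.Finite := (P.finA.image _).union (hVpf v)
  have hWs : IsStemIn W := by
    rintro y x (hx | hx) hyx
    · exact Or.inl (P.stemB hx hyx)
    · exact Or.inr (le_trans hyx hx)
  obtain ⟨q, hqiff, hqdc⟩ := univ_fun hUuniv hWf
  have hinj : Set.InjOn q W := fun a ha a' ha' h =>
    le_antisymm ((hqiff a ha a' ha').1 h.le) ((hqiff a' ha' a ha).1 h.ge)
  have hsub : ∀ S ⊆ W, IsStemIn S → IsStemIn (q '' S) := by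
    rintro S hSW hS y x ⟨a, ha, rfl⟩ hyx
    obtain ⟨w, hw, rfl⟩ := hqdc y a (hSW ha) hyx
    exact ⟨w, hS ha ((hqiff w hw a (hSW ha)).1 hyx), rfl⟩
  have hinv : ∀ a ∈ W, Function.invFunOn q W (q a) = a :=
    fun a ha => hinj.leftInvOn_invFunOn ha
  have hqWs : IsStemIn (q '' W) := hsub W Set.Subset.rfl hWs
  have hqBs : IsStemIn (q '' B) := hsub B hBW P.stemB
  have hqBf : (q '' B).Finite := (P.finA.image _).image _
  obtain ⟨g, hg⟩ := hom_fun hUhom P.finA hqBf P.stemA hqBs (fun x => q (P.p x))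
      (fun a ha => ⟨P.p a, ⟨a, ha, rfl⟩, rfl⟩)
      (by rintro b ⟨x, ⟨a, ha, rfl⟩, rfl⟩; exact ⟨a, ha, rfl⟩)
      (by intro a ha a' ha'
          exact (hqiff _ (hBW ⟨a, ha, rfl⟩) _ (hBW ⟨a', ha', rfl⟩)).trans
            (P.piff a ha a' ha'))
  set A' : Set U := g ⁻¹' (q '' W) with hA'
  set p' : U → V := fun x => Function.invFunOn q W (g x) with hp'
  have hmemA' : ∀ x ∈ A', p' x ∈ W ∧ q (p' x) = g x := by
    intro x hx
    obtain ⟨w, hw, hqw⟩ := hx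
    constructor
    · rw [hp']; simp only [← hqw, hinv w hw]; exact hw
    · rw [hp']; simp only [← hqw, hinv w hw]
  have himg : p' '' A' = W := by
    ext w
    constructor
    · rintro ⟨x, hx, rfl⟩; exact (hmemA' x hx).1
    · intro hw
      refine ⟨g.symm (q w), ?_, ?_⟩
      · show g (g.symm (q w)) ∈ q '' W
        rw [g.apply_symm_apply]; exact ⟨w, hw, rfl⟩
      · show Function.invFunOn q W (g (g.symm (q w))) = w
        rw [g.apply_symm_apply, hinv w hw]
  have hAA' : P.A ⊆ A' := by
    intro a ha
    show g a ∈ q '' W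
    rw [hg a ha]
    exact ⟨P.p a, hBW ⟨a, ha, rfl⟩, rfl⟩
  have hagree : ∀ a ∈ P.A, p' a = P.p a := by
    intro a ha
    rw [hp']
    simp only [hg a ha, hinv _ (hBW ⟨a, ha, rfl⟩)]
  refine ⟨⟨A', p', ?_, ?_, ?_, ?_⟩, hAA', hagree, ?_⟩
  · exact Set.Finite.preimage g.injective.injOn (hWf.image q)
  · intro y x hx hyx
    show g y ∈ q '' W
    exact hqWs hx (g.le_iff_le.2 hyx)
  · show IsStemIn (p' '' A')
    rw [himg]; exact hWs
  · intro x hx x' hx'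
    obtain ⟨hm, he⟩ := hmemA' x hx
    obtain ⟨hm', he'⟩ := hmemA' x' hx'
    rw [← hqiff _ hm _ hm', he, he', g.le_iff_le]
  · have hvW : v ∈ W := Or.inr le_rfl
    have := himg ▸ hvW
    obtain ⟨a, ha, hav⟩ := (himg.symm ▸ hvW : v ∈ p' '' A')
    exact ⟨a, ha, hav⟩


/-- Combined back-and-forth step. -/
lemma ext_step [Nonempty U] [Nonempty V]
    (hUuniv : ∀ (C : Type) (_ : PartialOrder C), Countable C →
      (∀ x : C, {s : C | s ≤ x}.Finite) →
      ∃ f : C ↪o U, ∀ (u : U) (c : C), u ≤ f c → ∃ c' : C, f c' = u)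
    (hVuniv : ∀ (C : Type) (_ : PartialOrder C), Countable C →
      (∀ x : C, {s : C | s ≤ x}.Finite) →
      ∃ f : C ↪o V, ∀ (v : V) (c : C), v ≤ f c → ∃ c' : C, f c' = v)
    (hUhom : ∀ (A B : Set U), A.Finite → B.Finite → IsStemIn A → IsStemIn B →
      ∀ e : A ≃o B, ∃ g : U ≃o U, ∀ a : A, g a = (e a : U))
    (hVhom : ∀ (A B : Set V), A.Finite → B.Finite → IsStemIn A → IsStemIn B →
      ∀ e : A ≃o B, ∃ g : V ≃o V, ∀ a : A, g a = (e a : V))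
    (hUpf : ∀ x : U, {s : U | s ≤ x}.Finite)
    (hVpf : ∀ x : V, {s : V | s ≤ x}.Finite)
    (P : PIso U V) (u : U) (v : V) :
    ∃ P' : PIso U V, P.A ⊆ P'.A ∧ (∀ a ∈ P.A, P'.p a = P.p a) ∧ u ∈ P'.A ∧
      ∃ a ∈ P'.A, P'.p a = v := by
  obtain ⟨P1, h1, h2, h3⟩ := ext_fwd hVuniv hVhom hUpf P u
  obtain ⟨P2, g1, g2, g3⟩ := ext_bwd hUuniv hUhom hVpf P1 v
  exact ⟨P2, h1.trans g1, fun a ha => (g2 a (h1 ha)).trans (h2 a ha), g1 h3, g3⟩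

end Aux

/-- Any two countable past-finite causal sets that are both
stem-universal and homogeneous are order-isomorphic. -/
theorem stmt_15 (U V : Type) [PartialOrder U] [PartialOrder V]
    (hUc : Countable U) (hVc : Countable V)
    (hUpf : ∀ x : U, {s : U | s ≤ x}.Finite)
    (hVpf : ∀ x : V, {s : V | s ≤ x}.Finite)
    (hUuniv : ∀ (C : Type) (_ : PartialOrder C), Countable C →
      (∀ x : C, {s : C | s ≤ x}.Finite) →
      ∃ f : C ↪o U, ∀ (u : U) (c : C), u ≤ f c → ∃ c' : C, f c' = u)
    (hVuniv : ∀ (C : Type) (_ : PartialOrder C), Countable C →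
      (∀ x : C, {s : C | s ≤ x}.Finite) →
      ∃ f : C ↪o V, ∀ (v : V) (c : C), v ≤ f c → ∃ c' : C, f c' = v)
    (hUhom : ∀ (A B : Set U), A.Finite → B.Finite → IsStemIn A → IsStemIn B →
      ∀ e : A ≃o B, ∃ g : U ≃o U, ∀ a : A, g a = (e a : U))
    (hVhom : ∀ (A B : Set V), A.Finite → B.Finite → IsStemIn A → IsStemIn B →
      ∀ e : A ≃o B, ∃ g : V ≃o V, ∀ a : A, g a = (e a : V)) :
    Nonempty (U ≃o V) := by
  classical
  haveI := hUc; haveI := hVc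
  by_cases hU : IsEmpty U
  · obtain ⟨f, -⟩ := hUuniv V inferInstance hVc hVpf
    haveI : IsEmpty V := ⟨fun v => hU.false (f v)⟩
    exact ⟨⟨Equiv.equivOfIsEmpty U V, fun {a b} => isEmptyElim a⟩⟩
  haveI : Nonempty U := not_isEmpty_iff.1 hU
  obtain ⟨f0, -⟩ := hVuniv U inferInstance hUc hUpf
  haveI : Nonempty V := ⟨f0 (Classical.arbitrary U)⟩
  obtain ⟨su, hsu⟩ := exists_surjective_nat U
  obtain ⟨sv, hsv⟩ := exists_surjective_nat V
  have hstep : ∀ (P : PIso U V) (u : U) (v : V),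
      ∃ P' : PIso U V, P.A ⊆ P'.A ∧ (∀ a ∈ P.A, P'.p a = P.p a) ∧ u ∈ P'.A ∧
        ∃ a ∈ P'.A, P'.p a = v :=
    fun P u v => ext_step hUuniv hVuniv hUhom hVhom hUpf hVpf P u v
  have P0 : PIso U V := ⟨∅, fun _ => Classical.arbitrary V, Set.finite_empty,
    fun y x hx _ => absurd hx (Set.notMem_empty x),
    (by rintro y x ⟨a, ha, -⟩ _; exact absurd ha (Set.notMem_empty a)),
    fun a ha _ _ => absurd ha (Set.notMem_empty a)⟩
  set Q : ℕ → PIso U V :=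
    fun n => Nat.rec P0 (fun n P => Classical.choose (hstep P (su n) (sv n))) n with hQdef
  have hQ : ∀ n, (Q n).A ⊆ (Q (n+1)).A ∧ (∀ a ∈ (Q n).A, (Q (n+1)).p a = (Q n).p a) ∧
      su n ∈ (Q (n+1)).A ∧ ∃ a ∈ (Q (n+1)).A, (Q (n+1)).p a = sv n :=
    fun n => Classical.choose_spec (hstep (Q n) (su n) (sv n))
  have hmono : ∀ m n, m ≤ n →
      (Q m).A ⊆ (Q n).A ∧ ∀ a ∈ (Q m).A, (Q n).p a = (Q m).p a := by
    intro m n hmn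
    induction n, hmn using Nat.le_induction with
    | base => exact ⟨Set.Subset.rfl, fun a _ => rfl⟩
    | succ n hmn ih =>
      refine ⟨ih.1.trans (hQ n).1, fun a ha => ?_⟩
      rw [(hQ n).2.1 a (ih.1 ha), ih.2 a ha]
  have hex : ∀ u : U, ∃ n, u ∈ (Q n).A := by
    intro u
    obtain ⟨n, rfl⟩ := hsu u
    exact ⟨n + 1, (hQ n).2.2.1⟩
  set F : U → V := fun u => (Q (Nat.find (hex u))).p u with hFdef
  have hF : ∀ (n : ℕ) (u : U), u ∈ (Q n).A → F u = (Q n).p u := by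
    intro n u hu
    have hk : u ∈ (Q (Nat.find (hex u))).A := Nat.find_spec (hex u)
    have hkn : Nat.find (hex u) ≤ n := Nat.find_min' (hex u) hu
    exact ((hmono _ n hkn).2 u hk).symm
  have hFiff : ∀ u u' : U, (F u ≤ F u' ↔ u ≤ u') := by
    intro u u'
    obtain ⟨n1, h1⟩ := hex u
    obtain ⟨n2, h2⟩ := hex u'
    have h1' : u ∈ (Q (max n1 n2)).A := (hmono n1 _ (le_max_left _ _)).1 h1
    have h2' : u' ∈ (Q (max n1 n2)).A := (hmono n2 _ (le_max_right _ _)).1 h2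
    rw [hF _ u h1', hF _ u' h2']
    exact (Q (max n1 n2)).piff u h1' u' h2'
  have hinj : Function.Injective F := fun u u' h =>
    le_antisymm ((hFiff u u').1 h.le) ((hFiff u' u).1 h.ge)
  have hsurj : Function.Surjective F := by
    intro v
    obtain ⟨n, rfl⟩ := hsv v
    obtain ⟨a, ha, hav⟩ := (hQ n).2.2.2
    exact ⟨a, by rw [hF (n+1) a ha]; exact hav⟩
  exact ⟨⟨Equiv.ofBijective F ⟨hinj, hsurj⟩, fun {a b} => hFiff a b⟩⟩
end

section
/- Let (U,≤) be a countable past-finite causal set realizing all one-point stem-extensions of finite stems, and let F ⊆ U be finite. Then (U \ F, ≤) also realizes all one-point stem-extensions of its finite stems; in particular (U \ F, ≤) is order-isomorphic to (U,≤). -/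
open Set

theorem isStemIn_iff_isLowerSet {U : Type*} [PartialOrder U] {A : Set U} :
    IsStemIn A ↔ IsLowerSet A :=
  ⟨fun h _ _ hba ha => h ha hba, fun h _ _ hx hyx => h hyx hx⟩

theorem IsLowerSet.image_val {U : Type*} [Preorder U] {A : Set U} (hA : IsLowerSet A)
    {D : Set A} (hD : IsLowerSet D) : IsLowerSet (Subtype.val '' D) :=
  hD.image_fibration fun a b hba => ⟨⟨b, hA hba a.2⟩, hba, rfl⟩

theorem IsLowerSet.insert_of_Iio_subset {U : Type*} [PartialOrder U] {s : Set U} {a : U}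
    (hs : IsLowerSet s) (h : Iio a ⊆ s) : IsLowerSet (insert a s) := by
  rintro b c hcb (rfl | hb)
  · exact hcb.eq_or_lt.imp id fun hca => h hca
  · exact mem_insert_of_mem _ (hs hcb hb)

theorem finite_lowerClosure {U : Type*} [Preorder U] (hpf : ∀ x : U, (Iic x).Finite)
    {s : Set U} (hs : s.Finite) : (lowerClosure s : Set U).Finite := by
  rw [coe_lowerClosure]
  exact hs.biUnion fun x _ => hpf x

theorem exists_compl_range_eq_singleton {α β : Type*} [Finite β] {f : α → β}
    (hf : Function.Injective f) (h : Nat.card β = Nat.card α + 1) : ∃ z, (range f)ᶜ = {z} := by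
  apply ncard_eq_one.1
  have := ncard_add_ncard_compl (range f)
  rw [ncard_range_of_injective hf] at this
  omega

inductive OnePointExtension {P : Type*} [LE P] (D : LowerSet P)
  | of : P → OnePointExtension D
  | point : OnePointExtension D

namespace OnePointExtension

variable {P : Type*} [PartialOrder P] {D : LowerSet P}

instance : PartialOrder (OnePointExtension D) where
  le
    | of a, of b => a ≤ b
    | of a, point => a ∈ D
    | point, point => True
    | point, of _ => False
  le_refl
    | of a => le_refl a
    | point => trivial
  le_trans
    | of _, of _, of _, hab, hbc => le_trans hab hbc
    | of _, of _, point, hab, hbc => D.lower hab hbc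
    | of _, point, point, hab, _ => hab
    | of _, point, of _, _, hbc => hbc.elim
    | point, of _, _, hab, _ => hab.elim
    | point, point, point, _, _ => trivial
    | point, point, of _, _, hbc => hbc.elim
  le_antisymm
    | of _, of _, hab, hba => congrArg of (le_antisymm hab hba)
    | of _, point, _, hba => hba.elim
    | point, of _, hab, _ => hab.elim
    | point, point, _, _ => rfl

@[simp] theorem of_le_of {a b : P} : (of a : OnePointExtension D) ≤ of b ↔ a ≤ b := Iff.rfl

@[simp] theorem of_le_point {a : P} : (of a : OnePointExtension D) ≤ point ↔ a ∈ D := Iff.rfl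

@[simp] theorem not_point_le_of {a : P} : ¬ (point : OnePointExtension D) ≤ of a := id

@[simp] theorem of_lt_point {a : P} : (of a : OnePointExtension D) < point ↔ a ∈ D := by
  simp [lt_iff_le_not_ge]

def ofEmbedding : P ↪o OnePointExtension D :=
  OrderEmbedding.ofMapLEIff of fun _ _ => of_le_of

theorem isLowerSet_range_ofEmbedding :
    IsLowerSet (range (ofEmbedding : P ↪o OnePointExtension D)) := by
  rintro _ (b | _) hx ⟨a, rfl⟩
  · exact ⟨b, rfl⟩
  · exact absurd hx not_point_le_of

def equivOption : OnePointExtension D ≃ Option P where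
  toFun | of a => some a | point => none
  invFun | some a => of a | none => point
  left_inv x := by cases x <;> rfl
  right_inv x := by cases x <;> rfl

instance [Finite P] : Finite (OnePointExtension D) := Finite.of_equiv _ equivOption.symm

theorem card_eq [Finite P] : Nat.card (OnePointExtension D) = Nat.card P + 1 := by
  rw [Nat.card_congr equivOption, Finite.card_option]

variable {X : Type*} [Preorder X]

def lift (φ : P ↪o X) (p : X) (hle : ∀ a, φ a ≤ p ↔ a ∈ D) (hnle : ∀ a, ¬ p ≤ φ a) :
    OnePointExtension D ↪o X :=
  OrderEmbedding.ofMapLEIff (fun | of a => φ a | point => p) <| by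
    rintro (a | _) (b | _) <;> simp [hle, hnle]

variable {φ : P ↪o X} {p : X} {hle : ∀ a, φ a ≤ p ↔ a ∈ D} {hnle : ∀ a, ¬ p ≤ φ a}

theorem range_lift : range (lift φ p hle hnle) = insert p (range φ) := by
  ext x
  simp only [mem_range, mem_insert_iff]
  constructor
  · rintro ⟨a | _, rfl⟩
    exacts [Or.inr ⟨a, rfl⟩, Or.inl rfl]
  · rintro (rfl | ⟨a, rfl⟩)
    exacts [⟨point, rfl⟩, ⟨of a, rfl⟩]

theorem surjective_lift (hp : (range φ)ᶜ = {p}) : Function.Surjective (lift φ p hle hnle) := by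
  rw [← range_eq_univ, range_lift, ← compl_compl (range φ), hp, insert_eq, union_compl_self]

end OnePointExtension

section Realizes

open OnePointExtension

variable {U : Type*} [PartialOrder U]

/-- `RealizesOnePointExt` only quantifies over `B : Type`; `Shrink` moves a finite poset there
from any universe. -/
theorem RealizesOnePointExt.exists_embedding (h : RealizesOnePointExt U) {A : Set U}
    (hA : A.Finite) (hAl : IsLowerSet A) {B : Type*} [PartialOrder B] [Finite B] (f : A ↪o B)
    (hf : IsLowerSet (range f)) (hcard : Nat.card B = A.ncard + 1) :
    ∃ g : B ↪o U, (∀ a, g (f a) = a) ∧ IsLowerSet (range g) := by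
  let e := orderIsoShrink.{0} B
  obtain ⟨g, hgf, hg⟩ := h A hA (isStemIn_iff_isLowerSet.2 hAl) (Shrink B) inferInstance
    (f.trans e.toOrderEmbedding)
    (fun b a hb => by
      obtain ⟨a', ha'⟩ := hf (e.symm_apply_le.2 hb) (mem_range_self a)
      exact ⟨a', by simp [ha']⟩)
    (by rwa [Nat.card_congr e.toEquiv.symm])
  refine ⟨e.toOrderEmbedding.trans g, hgf, ?_⟩
  rintro _ u hu ⟨b, rfl⟩
  obtain ⟨b', rfl⟩ := hg u (e b) hu
  exact ⟨e.symm b', by simp⟩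

theorem RealizesOnePointExt.exists_Iio_eq (h : RealizesOnePointExt U) {A D : Set U}
    (hA : A.Finite) (hAl : IsLowerSet A) (hDl : IsLowerSet D) (hDA : D ⊆ A) :
    ∃ w ∉ A, Iio w = D := by
  have := hA.to_subtype
  let D' : LowerSet A := ⟨Subtype.val ⁻¹' D, hDl.preimage (Subtype.mono_coe _)⟩
  obtain ⟨g, hgf, hg⟩ := h.exists_embedding hA hAl (ofEmbedding (D := D'))
    isLowerSet_range_ofEmbedding (by rw [card_eq, Nat.card_coe_set_eq])
  have hgof (a : A) : g (of a) = a := hgf a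
  refine ⟨g point, fun hw => ?_, Set.ext fun u => ⟨fun hu => ?_, fun hu => ?_⟩⟩
  · exact nomatch g.injective (hgof ⟨_, hw⟩ : g (of ⟨_, hw⟩) = g point)
  · obtain ⟨x | _, rfl⟩ := hg hu.le (mem_range_self point)
    · rw [hgof]
      exact of_lt_point.1 (g.lt_iff_lt.1 hu)
    · exact absurd hu (lt_irrefl _)
  · exact (hgof ⟨u, hDA hu⟩).symm.trans_lt (g.lt_iff_lt.2 (of_lt_point.2 hu))

/-- The abstract extension `B` of `A` by a point `z` is a copy of `OnePointExtension D` for the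
past `D` of `z`, which embeds in `U` by sending the new point to a `w` with the same past. -/
theorem realizesOnePointExt_of_exists_Iio_eq (H : ∀ A D : Set U, A.Finite → IsLowerSet A →
      IsLowerSet D → D ⊆ A → ∃ w ∉ A, Iio w = D) :
    RealizesOnePointExt U := by
  intro A hA hAs B _ f hf hcard
  have hAl := isStemIn_iff_isLowerSet.1 hAs
  have : Finite B := Nat.finite_of_card_ne_zero (by omega)
  obtain ⟨z, hz⟩ := exists_compl_range_eq_singleton f.injective (by rwa [Nat.card_coe_set_eq])
  have hzf (a : A) : f a ≠ z := fun h => (hz.symm ▸ mem_singleton z : z ∈ (range f)ᶜ) ⟨a, h⟩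
  let D : LowerSet A := ⟨f ⁻¹' Iio z, (isLowerSet_Iio z).preimage f.monotone⟩
  obtain ⟨w, hwA, hw⟩ := H A (Subtype.val '' (D : Set A)) hA hAl (hAl.image_val D.lower)
    (Subtype.coe_image_subset _ _)
  let R : OnePointExtension D ↪o B := lift f z (fun a => (hzf a).le_iff_lt)
    (fun a hza => by obtain ⟨a', rfl⟩ := hf _ _ hza; exact hzf a' rfl)
  let e := OrderIso.ofSurjective R (surjective_lift hz)
  let E : OnePointExtension D ↪o U := lift (OrderEmbedding.subtype _) w
    (fun a => by
      rw [OrderEmbedding.subtype_apply, (ne_of_mem_of_not_mem a.2 hwA).le_iff_lt, ← mem_Iio, hw,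
        Subtype.val_injective.mem_set_image]
      rfl)
    (fun a hwa => hwA (hAl hwa a.2))
  have hE : IsLowerSet (range E) := by
    rw [range_lift, OrderEmbedding.coe_subtype, Subtype.range_coe]
    exact hAl.insert_of_Iio_subset (hw ▸ Subtype.coe_image_subset _ _)
  refine ⟨e.symm.toOrderEmbedding.trans E, fun a => congrArg E (e.symm_apply_apply (of a)),
    fun u b hu => ?_⟩
  obtain ⟨x, rfl⟩ := hE hu (mem_range_self _)
  exact ⟨R x, congrArg E (e.symm_apply_apply x)⟩

theorem RealizesOnePointExt.nonempty (h : RealizesOnePointExt U) : Nonempty U :=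
  let ⟨w, _⟩ := h.exists_Iio_eq finite_empty isLowerSet_empty isLowerSet_empty subset_rfl
  ⟨w⟩

theorem RealizesOnePointExt.subtype_notMem (hpf : ∀ x : U, (Iic x).Finite)
    (h : RealizesOnePointExt U) {F : Set U} (hF : F.Finite) :
    RealizesOnePointExt {x // x ∉ F} := by
  refine realizesOnePointExt_of_exists_Iio_eq fun A D hA hAl hDl hDA => ?_
  obtain ⟨w, hwA, hw⟩ := h.exists_Iio_eq (A := lowerClosure (Subtype.val '' A ∪ F))
    (D := lowerClosure (Subtype.val '' D)) (finite_lowerClosure hpf ((hA.image _).union hF))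
    (lowerClosure _).lower (lowerClosure _).lower
    (lowerClosure_mono (subset_union_of_subset_left (image_mono hDA) _))
  have hwF : w ∉ F := fun hw' => hwA (subset_lowerClosure (Or.inr hw'))
  refine ⟨⟨w, hwF⟩, fun hw' => hwA (subset_lowerClosure (Or.inl ⟨_, hw', rfl⟩)), ?_⟩
  ext u
  rw [mem_Iio, ← Subtype.coe_lt_coe, ← mem_Iio, hw, SetLike.mem_coe, mem_lowerClosure]
  exact ⟨fun ⟨_, ⟨d, hd, rfl⟩, hud⟩ => hDl hud hd, fun hu => ⟨u, mem_image_of_mem _ hu, le_rfl⟩⟩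

end Realizes

structure StemIso (S T : Type*) [PartialOrder S] [PartialOrder T] extends PartialEquiv S T where
  finite_source : source.Finite
  isLowerSet_source : IsLowerSet source
  isLowerSet_target : IsLowerSet target
  le_iff_le ⦃a b : S⦄ : a ∈ source → b ∈ source → (toFun a ≤ toFun b ↔ a ≤ b)

namespace StemIso

variable {S T : Type*} [PartialOrder S] [PartialOrder T]

instance : CoeFun (StemIso S T) fun _ => S → T := ⟨fun G => G.toPartialEquiv⟩

instance : Preorder (StemIso S T) where
  le G G' := G.source ⊆ G'.source ∧ EqOn G' G G.source
  le_refl G := ⟨subset_rfl, eqOn_refl _ _⟩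
  le_trans _ _ _ h h' := ⟨h.1.trans h'.1, fun _ ha => (h'.2 (h.1 ha)).trans (h.2 ha)⟩

theorem finite_target (G : StemIso S T) : G.target.Finite :=
  G.image_source_eq_target ▸ G.finite_source.image _

def symm (G : StemIso S T) : StemIso T S where
  toPartialEquiv := G.toPartialEquiv.symm
  finite_source := G.finite_target
  isLowerSet_source := G.isLowerSet_target
  isLowerSet_target := G.isLowerSet_source
  le_iff_le c d hc hd := by
    conv_rhs => rw [← G.right_inv hc, ← G.right_inv hd]
    exact (G.le_iff_le (G.map_target hc) (G.map_target hd)).symm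

theorem symm_symm (G : StemIso S T) : G.symm.symm = G := rfl

theorem symm_mono {G G' : StemIso S T} (h : G ≤ G') : G.symm ≤ G'.symm := by
  have hsrc {c} (hc : c ∈ G.target) : G.symm c ∈ G'.source := h.1 (G.map_target hc)
  have hG' {c} (hc : c ∈ G.target) : G' (G.symm c) = c :=
    (h.2 (G.map_target hc)).trans (G.right_inv hc)
  have htgt {c} (hc : c ∈ G.target) : c ∈ G'.target := hG' hc ▸ G'.map_source (hsrc hc)
  exact ⟨fun c hc => htgt hc,
    fun c hc => ((G'.eq_symm_apply (hsrc hc) (htgt hc)).2 (hG' hc)).symm⟩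

theorem isLowerSet_image (G : StemIso S T) {X : Set S} (hX : IsLowerSet X)
    (hXs : X ⊆ G.source) : IsLowerSet (G '' X) := by
  rintro _ c hc ⟨a, ha, rfl⟩
  have hct : c ∈ G.target := G.isLowerSet_target hc (G.map_source (hXs ha))
  rw [← G.right_inv hct, G.le_iff_le (G.map_target hct) (hXs ha)] at hc
  exact ⟨G.symm c, hX hc ha, G.right_inv hct⟩

open Classical in
noncomputable def addPoint (G : StemIso S T) {y : S} {t : T} (hy : y ∉ G.source)
    (ht : t ∉ G.target) (hyI : Iio y ⊆ G.source) (htI : Iio t = G '' Iio y) : StemIso S T where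
  toPartialEquiv := G.disjointUnion (.single y t) (disjoint_singleton_right.2 hy)
    (disjoint_singleton_right.2 ht)
  finite_source := G.finite_source.union (finite_singleton y)
  isLowerSet_source := by
    show IsLowerSet (G.source ∪ {y})
    rw [union_singleton]
    exact G.isLowerSet_source.insert_of_Iio_subset hyI
  isLowerSet_target := by
    show IsLowerSet (G.target ∪ {t})
    rw [union_singleton]
    refine G.isLowerSet_target.insert_of_Iio_subset ?_
    rw [htI, ← G.image_source_eq_target]
    exact image_mono hyI
  le_iff_le a b ha hb := by
    change G.source.piecewise G (fun _ => t) a ≤ G.source.piecewise G (fun _ => t) b ↔ a ≤ b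
    rcases ha with ha | rfl <;> rcases hb with hb | rfl
    · rw [piecewise_eq_of_mem _ _ _ ha, piecewise_eq_of_mem _ _ _ hb]
      exact G.le_iff_le ha hb
    · rw [piecewise_eq_of_mem _ _ _ ha, piecewise_eq_of_notMem _ _ _ hy,
        (ne_of_mem_of_not_mem (G.map_source ha) ht).le_iff_lt,
        (ne_of_mem_of_not_mem ha hy).le_iff_lt, ← mem_Iio, htI]
      exact G.injOn.mem_image_iff hyI ha
    · rw [piecewise_eq_of_mem _ _ _ hb, piecewise_eq_of_notMem _ _ _ hy]
      exact iff_of_false (fun h => ht (G.isLowerSet_target h (G.map_source hb)))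
        (fun h => hy (G.isLowerSet_source h hb))
    · exact iff_of_true le_rfl le_rfl

theorem le_addPoint (G : StemIso S T) {y : S} {t : T} (hy : y ∉ G.source)
    (ht : t ∉ G.target) (hyI : Iio y ⊆ G.source) (htI : Iio t = G '' Iio y) :
    G ≤ G.addPoint hy ht hyI htI := by
  classical
  exact ⟨subset_union_left, fun a ha => piecewise_eq_of_mem _ _ _ ha⟩

theorem mem_source_addPoint (G : StemIso S T) {y : S} {t : T} (hy : y ∉ G.source)
    (ht : t ∉ G.target) (hyI : Iio y ⊆ G.source) (htI : Iio t = G '' Iio y) :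
    y ∈ (G.addPoint hy ht hyI htI).source :=
  mem_union_right _ rfl

theorem exists_le_mem_source_of_Iio_subset (hT : RealizesOnePointExt T) (G : StemIso S T)
    {y : S} (hy : y ∉ G.source) (hyI : Iio y ⊆ G.source) :
    ∃ G', G ≤ G' ∧ y ∈ G'.source := by
  obtain ⟨t, ht, htI⟩ := hT.exists_Iio_eq G.finite_target G.isLowerSet_target
    (G.isLowerSet_image (isLowerSet_Iio y) hyI) (G.image_source_eq_target ▸ image_mono hyI)
  exact ⟨_, G.le_addPoint hy ht hyI htI, G.mem_source_addPoint hy ht hyI htI⟩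

/-- Induction on the number of points of `X` missing from the source, always adding a minimal
one: its strict past lies in `X`, hence already in the source. -/
theorem exists_le_subset_source (hT : RealizesOnePointExt T) (G : StemIso S T) {X : Set S}
    (hX : X.Finite) (hXl : IsLowerSet X) : ∃ G', G ≤ G' ∧ X ⊆ G'.source := by
  induction hn : (X \ G.source).ncard using Nat.strong_induction_on generalizing G with
  | _ n ih =>
    obtain hXs | hne := (X \ G.source).eq_empty_or_nonempty
    · exact ⟨G, le_rfl, sdiff_eq_empty.1 hXs⟩
    obtain ⟨y, hy⟩ := (hX.sdiff (t := G.source)).exists_minimal hne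
    have hyI : Iio y ⊆ G.source := fun u hu => by
      by_contra hus
      exact hy.not_lt ⟨hXl hu.le hy.prop.1, hus⟩ hu
    obtain ⟨G₁, hGG₁, hy₁⟩ := exists_le_mem_source_of_Iio_subset hT G hy.prop.2 hyI
    have hlt : (X \ G₁.source).ncard < n := hn ▸ ncard_lt_ncard
      (ssubset_of_subset_not_subset (sdiff_subset_sdiff_right hGG₁.1)
        fun h => (h hy.prop).2 hy₁) hX.sdiff
    obtain ⟨G₂, hG₁G₂, hX₂⟩ := ih _ hlt G₁ rfl
    exact ⟨G₂, hGG₁.trans hG₁G₂, hX₂⟩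

theorem isCofinal_mem_source (hpS : ∀ x : S, (Iic x).Finite) (hT : RealizesOnePointExt T)
    (x : S) : IsCofinal {G : StemIso S T | x ∈ G.source} := fun G => by
  obtain ⟨G', hGG', hX⟩ := exists_le_subset_source hT G (hpS x) (isLowerSet_Iic x)
  exact ⟨G', hX self_mem_Iic, hGG'⟩

theorem isCofinal_mem_target (hpT : ∀ x : T, (Iic x).Finite) (hS : RealizesOnePointExt S)
    (t : T) : IsCofinal {G : StemIso S T | t ∈ G.target} := fun G => by
  obtain ⟨H, ht, hGH⟩ := isCofinal_mem_source hpT hS t G.symm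
  exact ⟨H.symm, ht, G.symm_symm ▸ symm_mono hGH⟩

theorem nonempty_orderIso_of_monotone (G : ℕ → StemIso S T) (hG : Monotone G)
    (hS : ∀ s, ∃ n, s ∈ (G n).source) (hT : ∀ t, ∃ n, t ∈ (G n).target) :
    Nonempty (S ≃o T) := by
  choose N hN using hS
  have hsrc {s : S} {n : ℕ} (h : N s ≤ n) : s ∈ (G n).source := (hG h).1 (hN s)
  have hN_eq {s : S} {n : ℕ} (hs : s ∈ (G n).source) : G (N s) s = G n s := by
    rcases le_total n (N s) with h | h
    · exact (hG h).2 hs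
    · exact ((hG h).2 (hN s)).symm
  have hle (a b : S) : G (N a) a ≤ G (N b) b ↔ a ≤ b := by
    rw [hN_eq (hsrc (le_max_left _ (N b))), hN_eq (hsrc (le_max_right (N a) _))]
    exact (G _).le_iff_le (hsrc (le_max_left _ _)) (hsrc (le_max_right _ _))
  have hsurj : Function.Surjective fun s => G (N s) s := fun t => by
    obtain ⟨n, ht⟩ := hT t
    exact ⟨(G n).symm t, (hN_eq ((G n).map_target ht)).trans ((G n).right_inv ht)⟩
  exact ⟨OrderIso.ofSurjective (OrderEmbedding.ofMapLEIff _ hle) hsurj⟩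

end StemIso

theorem RealizesOnePointExt.nonempty_orderIso {S T : Type*} [PartialOrder S] [PartialOrder T]
    [Countable S] [Countable T] (hpS : ∀ x : S, (Iic x).Finite) (hpT : ∀ x : T, (Iic x).Finite)
    (hS : RealizesOnePointExt S) (hT : RealizesOnePointExt T) : Nonempty (S ≃o T) := by
  have := Encodable.ofCountable (S ⊕ T)
  have := Classical.inhabited_of_nonempty hS.nonempty
  have := Classical.inhabited_of_nonempty hT.nonempty
  let G₀ : StemIso S T :=
    ⟨default, finite_empty, isLowerSet_empty, isLowerSet_empty, fun _ _ ha => ha.elim⟩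
  let 𝒟 : S ⊕ T → Order.Cofinal (StemIso S T) := Sum.elim
    (fun s => ⟨_, StemIso.isCofinal_mem_source hpS hT s⟩)
    (fun t => ⟨_, StemIso.isCofinal_mem_target hpT hS t⟩)
  exact StemIso.nonempty_orderIso_of_monotone _ (Order.sequenceOfCofinals.monotone G₀ 𝒟)
    (fun s => ⟨_, Order.sequenceOfCofinals.encode_mem G₀ 𝒟 (.inl s)⟩)
    (fun t => ⟨_, Order.sequenceOfCofinals.encode_mem G₀ 𝒟 (.inr t)⟩)

/-- Removing a finite set from a countable past-finite causal set
realizing all one-point stem-extensions yields a causal set with the same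
property; in particular it is order-isomorphic to the original. -/
theorem stmt_16 {U : Type*} [PartialOrder U] [Countable U]
    (hpf : ∀ x : U, {s : U | s ≤ x}.Finite)
    (hreal : RealizesOnePointExt U)
    (F : Set U) (hF : F.Finite) :
    RealizesOnePointExt {x : U // x ∉ F} ∧
      Nonempty ({x : U // x ∉ F} ≃o U) := by
  have hS := hreal.subtype_notMem hpf hF
  have hpS (x : {x : U // x ∉ F}) : (Iic x).Finite := (hpf x).preimage Subtype.val_injective.injOn
  exact ⟨hS, hS.nonempty_orderIso hpS hpf hreal⟩
end

section
/- There is no countable causal set (U,≤) such that every countable causal set admits a stem-embedding into (U,≤). -/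
namespace Stmt18

/-- Element of the comb poset: level `n`, twin flag `b`; doubled levels are `{m+1 | m ∈ A}`. -/
structure CA (A : Set ℕ) where
  n : ℕ
  b : Bool
  hb : b = true → ∃ m ∈ A, n = m + 1

theorem CA.ext' {A : Set ℕ} {x y : CA A} (h1 : x.n = y.n) (h2 : x.b = y.b) : x = y := by
  cases x; cases y; simp_all

lemma CA.pair_inj {A : Set ℕ} : Function.Injective (fun z : CA A => (z.n, z.b)) :=
  fun x y h => CA.ext' (congrArg Prod.fst h) (congrArg Prod.snd h)

instance (A : Set ℕ) : Countable (CA A) :=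
  Function.Injective.countable CA.pair_inj

instance (A : Set ℕ) : PartialOrder (CA A) where
  le x y := x = y ∨ y.n < x.n
  le_refl x := Or.inl rfl
  le_trans x y z h h' := by
    rcases h with rfl | h
    · exact h'
    · rcases h' with rfl | h'
      · exact Or.inr h
      · exact Or.inr (h'.trans h)
  le_antisymm x y h h' := by
    rcases h with rfl | h
    · rfl
    · rcases h' with rfl | h'
      · rfl
      · exact absurd (h.trans h') (lt_irrefl _)

variable {A : Set ℕ}

lemma CA.le_def {x y : CA A} : x ≤ y ↔ x = y ∨ y.n < x.n := Iff.rfl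

def c0 (A : Set ℕ) : CA A := ⟨0, false, by simp⟩

lemma le_c0 (z : CA A) : z ≤ c0 A := by
  rcases Nat.eq_zero_or_pos z.n with h | h
  · left
    refine CA.ext' h ?_
    cases hb : z.b
    · rfl
    · obtain ⟨m, _, hm⟩ := z.hb hb
      omega
  · exact Or.inr h

def Below (A : Set ℕ) (k : ℕ) : Set (CA A) := {z | z.n < k}

lemma below_finite (k : ℕ) : (Below A k).Finite := by
  have h : Below A k ⊆ (fun z : CA A => (z.n, z.b)) ⁻¹' (Set.Iio k ×ˢ (Set.univ : Set Bool)) :=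
    fun z hz => ⟨hz, trivial⟩
  exact Set.Finite.subset
    (Set.Finite.preimage CA.pair_inj.injOn ((Set.finite_Iio k).prod Set.finite_univ)) h

noncomputable def cf (A : Set ℕ) (k : ℕ) : ℕ := (Below A k).ncard + 1

lemma cf_strictMono : StrictMono (cf A) := by
  apply strictMono_nat_of_lt_succ
  intro k
  have hss : Below A k ⊂ Below A (k + 1) := by
    constructor
    · exact fun z hz => hz.trans (Nat.lt_succ_self k)
    · intro hsub
      have : (⟨k, false, by simp⟩ : CA A) ∈ Below A k := hsub (Nat.lt_succ_self k)
      exact absurd this (lt_irrefl k)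
  have := Set.ncard_lt_ncard hss (below_finite (k + 1))
  simp only [cf]
  omega

def UpC (x : CA A) : Set (CA A) := {z | x ≤ z}

lemma upc_eq (x : CA A) : UpC x = insert x (Below A x.n) := by
  ext z
  constructor
  · rintro (rfl | h)
    · exact Or.inl rfl
    · exact Or.inr h
  · rintro (rfl | h)
    · exact Or.inl rfl
    · exact Or.inr h

lemma x_not_below (x : CA A) : x ∉ Below A x.n := lt_irrefl x.n

lemma upc_finite (x : CA A) : (UpC x).Finite := by
  rw [upc_eq]; exact (below_finite _).insert x

lemma upc_ncard (x : CA A) : (UpC x).ncard = cf A x.n := by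
  rw [upc_eq, Set.ncard_insert_of_notMem (x_not_below x) (below_finite _), cf]

lemma level_image (x : CA A) : (fun z : CA A => z.n) '' UpC x = Set.Iic x.n := by
  ext j
  constructor
  · rintro ⟨z, hz, rfl⟩
    rcases hz with rfl | h
    · exact Set.mem_Iic.mpr le_rfl
    · exact Set.mem_Iic.mpr h.le
  · intro hj
    have hj' : j ≤ x.n := hj
    rcases hj'.lt_or_eq with h | rfl
    · exact ⟨⟨j, false, by simp⟩, Or.inr h, rfl⟩
    · exact ⟨x, Or.inl rfl, rfl⟩

lemma locfinCA (x y : CA A) (_ : x < y) : {s : CA A | x ≤ s ∧ s ≤ y}.Finite :=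
  (upc_finite x).subset (fun _ hz => hz.1)

section USide

variable {U : Type} [PartialOrder U]

/-- Size of the interval `[x,u]`. -/
noncomputable def gU (u x : U) : ℕ := {z : U | x ≤ z ∧ z ≤ u}.ncard

/-- The set recovered from the past of `u`. -/
def RU (u : U) : Set ℕ :=
  {m | ∃ x y : U, x ≤ u ∧ y ≤ u ∧ x ≠ y ∧ gU u x = gU u y ∧
    (gU u '' {z : U | x ≤ z ∧ z ≤ u}).ncard = m + 2}

variable (f : CA A ↪o U) (hf : ∀ (u : U) (c : CA A), u ≤ f c → ∃ c', f c' = u)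

include hf

lemma interval_eq (x : CA A) :
    {z : U | f x ≤ z ∧ z ≤ f (c0 A)} = f '' UpC x := by
  ext z
  constructor
  · rintro ⟨h1, h2⟩
    obtain ⟨w, rfl⟩ := hf z (c0 A) h2
    exact ⟨w, f.le_iff_le.mp h1, rfl⟩
  · rintro ⟨w, hw, rfl⟩
    exact ⟨f.monotone hw, f.monotone (le_c0 w)⟩

lemma gU_f (x : CA A) : gU (f (c0 A)) (f x) = cf A x.n := by
  rw [gU, interval_eq f hf, Set.ncard_image_of_injective _ f.injective, upc_ncard]

lemma V_f (x : CA A) :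
    (gU (f (c0 A)) '' {z : U | f x ≤ z ∧ z ≤ f (c0 A)}).ncard = x.n + 1 := by
  rw [interval_eq f hf, ← Set.image_comp]
  have himg : (gU (f (c0 A)) ∘ f) '' UpC x
      = (cf A ∘ fun z : CA A => z.n) '' UpC x :=
    Set.image_congr (fun z _ => gU_f f hf z)
  rw [himg, Set.image_comp, level_image,
    Set.ncard_image_of_injective _ cf_strictMono.injective,
    ← Finset.coe_Iic, Set.ncard_coe_finset, Nat.card_Iic]

lemma RA_eq : RU (f (c0 A)) = A := by
  ext m
  constructor
  · rintro ⟨x, y, hx, hy, hne, hg, hcard⟩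
    obtain ⟨w, rfl⟩ := hf x (c0 A) hx
    obtain ⟨v, rfl⟩ := hf y (c0 A) hy
    rw [gU_f f hf, gU_f f hf] at hg
    have hn : w.n = v.n := cf_strictMono.injective hg
    rw [V_f f hf] at hcard
    have hwm : w.n = m + 1 := by omega
    have hb : w.b ≠ v.b := fun h => hne (congrArg f (CA.ext' hn h))
    have hex : ∃ m' ∈ A, m + 1 = m' + 1 := by
      cases hw : w.b
      · cases hv : v.b
        · rw [hw, hv] at hb; exact absurd rfl hb
        · obtain ⟨m', hm', h⟩ := v.hb hv
          exact ⟨m', hm', by omega⟩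
      · obtain ⟨m', hm', h⟩ := w.hb hw
        exact ⟨m', hm', by omega⟩
    obtain ⟨m', hm', h⟩ := hex
    have : m = m' := by omega
    rwa [this]
  · intro hm
    refine ⟨f ⟨m + 1, false, by simp⟩, f ⟨m + 1, true, fun _ => ⟨m, hm, rfl⟩⟩,
      f.monotone (le_c0 _), f.monotone (le_c0 _), ?_, ?_, ?_⟩
    · intro h
      have h2 := congrArg CA.b (f.injective h)
      simp at h2
    · rw [gU_f f hf, gU_f f hf]
    · rw [V_f f hf]

end USide

end Stmt18

/-- There is no countable causal set (locally finite poset) into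
which every countable causal set admits a stem-embedding. -/
theorem stmt_18 : ¬ ∃ (U : Type) (_ : PartialOrder U), Countable U ∧
    (∀ x y : U, x < y → {s : U | x ≤ s ∧ s ≤ y}.Finite) ∧
    (∀ (C : Type) (_ : PartialOrder C), Countable C →
      (∀ x y : C, x < y → {s : C | x ≤ s ∧ s ≤ y}.Finite) →
      ∃ f : C ↪o U, ∀ (u : U) (c : C), u ≤ f c → ∃ c' : C, f c' = u) := by
  rintro ⟨U, _instU, hcount, _hlf, huniv⟩
  choose f hf using fun A : Set ℕ =>
    huniv (Stmt18.CA A) inferInstance inferInstance (fun x y h => Stmt18.locfinCA x y h)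
  have hR : ∀ A : Set ℕ, Stmt18.RU (f A (Stmt18.c0 A)) = A :=
    fun A => Stmt18.RA_eq (f A) (hf A)
  obtain ⟨e, he⟩ := Countable.exists_injective_nat U
  exact Function.cantor_injective (fun A : Set ℕ => e (f A (Stmt18.c0 A)))
    (fun A B h => by
      have h2 : f A (Stmt18.c0 A) = f B (Stmt18.c0 B) := he h
      rw [← hR A, ← hR B, h2])
end
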